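/- arXiv:2308.01388 — 2 statements merged into one kernel-verified Lean document; each statement's English description precedes it below -/
import Mathlib

section
/- (Theorem 3.1, formula (Amri1).) Let λ ∈ C⁺ and X ∈ a. Then Amri's Bessel-type integral formula equals the new rank-one-kernel formula: (3Γ(3k)/(V(λ)^{2k}·Γ(k)²)) ∫_{λ3}^{λ2} ∫_{λ2}^{λ1} { (λ1−λ2)(ν1−ν2)·𝒥_{k−1/2}((x1−x2)(ν1−ν2)/2) + [(λ1−λ2)(ν1−ν2) − 2(λ1−ν1)(λ2−ν2)]·((x1−x2)(ν1−ν2)/(2(2k+1)))·𝒥_{k+1/2}((x1−x2)(ν1−ν2)/2) } (ν1−λ3)(ν2−λ3) e^{(x1+x2−2x3)(ν1+ν2)/2} W_k(λ,ν) dν1 dν2 = E_k(X,λ). -/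
open Real MeasureTheory

/-- The rank-one Dunkl kernel `E_k^{rk1}(x,v)`. -/
noncomputable def Erk1 (k x v : ℝ) : ℝ :=
  (Real.Gamma (k + 1/2) / (Real.sqrt Real.pi * Real.Gamma k)) *
    ∫ z in (-1 : ℝ)..1, Real.exp (z * x * v) * (1 - z) ^ (k - 1) * (1 + z) ^ k

/-- The normalized modified Bessel function `𝒥_a(y)`, for `a > -1/2`. -/
noncomputable def besselJ (a y : ℝ) : ℝ :=
  (Real.Gamma (a + 1) / (Real.sqrt Real.pi * Real.Gamma (a + 1/2))) *
    ∫ z in (-1 : ℝ)..1, Real.exp (y * z) * (1 - z ^ 2) ^ (a - 1/2)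

/-- `W_k(λ,ν)`. -/
noncomputable def Wk (k l1 l2 l3 n1 n2 : ℝ) : ℝ :=
  ((l1 - n1) * (l1 - n2) * (n1 - l2) * (l2 - n2) * (n1 - l3) * (n2 - l3)) ^ (k - 1)

/-- `V(λ) = (λ1-λ2)(λ1-λ3)(λ2-λ3)`. -/
def Vlam (l1 l2 l3 : ℝ) : ℝ := (l1 - l2) * (l1 - l3) * (l2 - l3)

/-- The `A₂` Dunkl kernel `E_k(X,λ)`, defined via the rank-one kernel formula. -/
noncomputable def EkA2 (k x1 x2 x3 l1 l2 l3 : ℝ) : ℝ :=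
  (3 * Real.Gamma (3 * k) / (Vlam l1 l2 l3 ^ (2 * k) * Real.Gamma k ^ 2)) *
    ∫ n2 in l3..l2, ∫ n1 in l2..l1,
      ((n1 - l2) * (l1 - n2) * Erk1 k ((x1 - x2) / 2) (n1 - n2)
        + (l1 - n1) * (l2 - n2) * Erk1 k (-(x1 - x2) / 2) (n1 - n2))
      * ((n1 - l3) * (n2 - l3)) * Real.exp ((x1 + x2 - 2 * x3) * (n1 + n2) / 2)
      * Wk k l1 l2 l3 n1 n2

/-! Splitting `(1 - z) ^ (k - 1) * (1 + z) ^ k = (1 - z ^ 2) ^ (k - 1) * (1 + z)` and integrating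
the `z`-part by parts against `d/dz (1 - z ^ 2) ^ k` gives
`E_k^{rk1}(x, v) = 𝒥_{k-1/2}(xv) + xv/(2k+1) 𝒥_{k+1/2}(xv)`. As `𝒥` is even, the two rank-one
terms of `E_k` then combine pointwise into Amri's integrand. -/

open intervalIntegral Set

lemma intervalIntegrable_one_sub_sq_rpow {s : ℝ} (hs : -1 < s) :
    IntervalIntegrable (fun z : ℝ => (1 - z ^ 2) ^ s) volume (-1) 1 := by
  have hleft : IntervalIntegrable (fun z : ℝ => (1 + z) ^ s) volume (-1) 0 := by
    simpa [add_comm] using (intervalIntegrable_rpow' (a := 0) (b := 1) hs).comp_add_right 1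
  have hright : IntervalIntegrable (fun z : ℝ => (1 - z) ^ s) volume 0 1 := by
    simpa using (intervalIntegrable_rpow' (a := 1) (b := 0) hs).comp_sub_left 1
  have hprod : IntervalIntegrable (fun z : ℝ => (1 - z) ^ s * (1 + z) ^ s) volume (-1) 1 := by
    refine (hleft.continuousOn_mul ?_).trans (hright.mul_continuousOn ?_)
    · refine ContinuousOn.rpow_const (by fun_prop) fun z hz => Or.inl ?_
      rw [uIcc_of_le (by norm_num)] at hz
      linarith [hz.2]
    · refine ContinuousOn.rpow_const (by fun_prop) fun z hz => Or.inl ?_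
      rw [uIcc_of_le (by norm_num)] at hz
      linarith [hz.1]
  refine (intervalIntegrable_congr fun z hz => ?_).mp hprod
  rw [uIoc_of_le (by norm_num)] at hz
  rw [show 1 - z ^ 2 = (1 - z) * (1 + z) by ring,
    mul_rpow (by linarith [hz.2]) (by linarith [hz.1])]

lemma integral_exp_mul_mul_one_sub_sq_rpow {k : ℝ} (hk : 0 < k) (y : ℝ) :
    ∫ z in (-1 : ℝ)..1, exp (y * z) * z * (1 - z ^ 2) ^ (k - 1)
      = y / (2 * k) * ∫ z in (-1 : ℝ)..1, exp (y * z) * (1 - z ^ 2) ^ k := by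
  have hv' : ∀ z ∈ Ioo (min (-1 : ℝ) 1) (max (-1) 1),
      HasDerivAt (fun z : ℝ => (1 - z ^ 2) ^ k) (-(2 * k) * (z * (1 - z ^ 2) ^ (k - 1))) z := by
    intro z hz
    rw [min_eq_left (by norm_num), max_eq_right (by norm_num)] at hz
    have hpos : 1 - z ^ 2 ≠ 0 := by nlinarith [hz.1, hz.2]
    convert ((hasDerivAt_pow 2 z).const_sub 1).rpow_const (p := k) (Or.inl hpos) using 1
    ring
  have hparts := integral_mul_deriv_eq_deriv_mul_of_hasDerivAt
    (u := fun z => exp (y * z)) (u' := fun z => y * exp (y * z)) (v := fun z => (1 - z ^ 2) ^ k)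
    (by fun_prop) ((continuous_rpow_const hk.le).comp (by fun_prop)).continuousOn
    (fun z _ => by simpa [mul_comm] using ((hasDerivAt_id z).const_mul y).exp) hv'
    ((by fun_prop : Continuous fun z => y * exp (y * z)).intervalIntegrable _ _)
    ((((intervalIntegrable_one_sub_sq_rpow (by linarith : -1 < k - 1)).continuousOn_mul
      continuousOn_id).const_mul (-(2 * k))))
  simp only [zero_rpow hk.ne', one_pow, neg_one_sq, sub_self, mul_zero, zero_sub] at hparts
  simp only [mul_left_comm (exp _), mul_assoc, intervalIntegral.integral_const_mul] at hparts ⊢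
  rw [div_mul_eq_mul_div, eq_div_iff (by positivity)]
  linarith

lemma integral_exp_mul_one_sub_rpow_mul_one_add_rpow {k : ℝ} (hk : 0 < k) (y : ℝ) :
    ∫ z in (-1 : ℝ)..1, exp (z * y) * (1 - z) ^ (k - 1) * (1 + z) ^ k
      = (∫ z in (-1 : ℝ)..1, exp (y * z) * (1 - z ^ 2) ^ (k - 1))
        + y / (2 * k) * ∫ z in (-1 : ℝ)..1, exp (y * z) * (1 - z ^ 2) ^ k := by
  have hint := intervalIntegrable_one_sub_sq_rpow (by linarith : -1 < k - 1)
  rw [← integral_exp_mul_mul_one_sub_sq_rpow hk y,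
    ← integral_add (hint.continuousOn_mul (by fun_prop))
      (hint.continuousOn_mul (by fun_prop))]
  refine integral_congr fun z hz => ?_
  rw [uIcc_of_le (by norm_num)] at hz
  have h1 : 0 ≤ 1 - z := by linarith [hz.2]
  have h2 : 0 ≤ 1 + z := by linarith [hz.1]
  -- `(1 + z) ^ k = (1 + z) ^ (k - 1) * (1 + z)` also at `z = -1`, since `k ≠ 0`
  rw [show 1 - z ^ 2 = (1 - z) * (1 + z) by ring, mul_rpow h1 h2,
    show (1 + z) ^ k = (1 + z) ^ (k - 1 + 1) by ring_nf, rpow_add_one' h2 (by linarith)]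
  ring_nf

lemma besselJ_neg (a y : ℝ) : besselJ a (-y) = besselJ a y := by
  unfold besselJ
  congr 1
  have h := integral_comp_neg (a := -1) (b := 1) fun z => exp (y * z) * (1 - z ^ 2) ^ (a - 1/2)
  norm_num at h
  simpa only [neg_mul, mul_neg] using h

lemma Erk1_eq_besselJ {k : ℝ} (hk : 0 < k) (x v : ℝ) :
    Erk1 k x v = besselJ (k - 1/2) (x * v)
      + x * v / (2 * k + 1) * besselJ (k + 1/2) (x * v) := by
  unfold Erk1 besselJ
  simp_rw [mul_assoc _ x v]
  rw [integral_exp_mul_one_sub_rpow_mul_one_add_rpow hk,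
    show k - 1/2 + 1 = k + 1/2 by ring, show k - 1/2 + 1/2 = k by ring,
    show k - 1/2 - 1/2 = k - 1 by ring, show k + 1/2 + 1/2 = k + 1 by ring,
    show k + 1/2 - 1/2 = k by ring,
    Gamma_add_one (by positivity : k + 1/2 ≠ 0), Gamma_add_one hk.ne']
  have hΓ := (Gamma_pos_of_pos hk).ne'
  have hΓ' := (Gamma_pos_of_pos (by linarith : 0 < k + 1/2)).ne'
  field_simp

lemma Erk1_combination {k : ℝ} (hk : 0 < k) (p q x v : ℝ) :
    p * Erk1 k x v + q * Erk1 k (-x) v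
      = (p + q) * besselJ (k - 1/2) (x * v)
        + (p - q) * (x * v / (2 * k + 1)) * besselJ (k + 1/2) (x * v) := by
  rw [Erk1_eq_besselJ hk, Erk1_eq_besselJ hk, neg_mul, besselJ_neg, besselJ_neg]
  ring

theorem amri_formula_eq_EkA2_general (k : ℝ) (hk : 0 < k) (l1 l2 l3 x1 x2 x3 : ℝ) :
    (3 * Real.Gamma (3 * k) / (Vlam l1 l2 l3 ^ (2 * k) * Real.Gamma k ^ 2)) *
      (∫ n2 in l3..l2, ∫ n1 in l2..l1,
        ((l1 - l2) * (n1 - n2) * besselJ (k - 1/2) ((x1 - x2) * (n1 - n2) / 2)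
          + ((l1 - l2) * (n1 - n2) - 2 * (l1 - n1) * (l2 - n2))
            * ((x1 - x2) * (n1 - n2) / (2 * (2 * k + 1)))
            * besselJ (k + 1/2) ((x1 - x2) * (n1 - n2) / 2))
        * ((n1 - l3) * (n2 - l3)) * Real.exp ((x1 + x2 - 2 * x3) * (n1 + n2) / 2)
        * Wk k l1 l2 l3 n1 n2)
    = EkA2 k x1 x2 x3 l1 l2 l3 := by
  unfold EkA2
  congr 1
  refine integral_congr fun n2 _ => integral_congr fun n1 _ => ?_
  rw [neg_div, Erk1_combination hk, ← div_div,
    show (x1 - x2) / 2 * (n1 - n2) = (x1 - x2) * (n1 - n2) / 2 by ring]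
  ring

/-- Theorem 3.1, formula (Amri1): Amri's Bessel-type integral formula
equals the new rank-one-kernel formula for the `A₂` Dunkl kernel. -/
theorem amri_formula_eq_EkA2 (k : ℝ) (hk : 0 < k) (l1 l2 l3 x1 x2 x3 : ℝ)
    (hl : l1 + l2 + l3 = 0) (hl12 : l2 < l1) (hl23 : l3 < l2)
    (hx : x1 + x2 + x3 = 0) :
    (3 * Real.Gamma (3 * k) / (Vlam l1 l2 l3 ^ (2 * k) * Real.Gamma k ^ 2)) *
      (∫ n2 in l3..l2, ∫ n1 in l2..l1,
        ((l1 - l2) * (n1 - n2) * besselJ (k - 1/2) ((x1 - x2) * (n1 - n2) / 2)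
          + ((l1 - l2) * (n1 - n2) - 2 * (l1 - n1) * (l2 - n2))
            * ((x1 - x2) * (n1 - n2) / (2 * (2 * k + 1)))
            * besselJ (k + 1/2) ((x1 - x2) * (n1 - n2) / 2))
        * ((n1 - l3) * (n2 - l3)) * Real.exp ((x1 + x2 - 2 * x3) * (n1 + n2) / 2)
        * Wk k l1 l2 l3 n1 n2)
    = EkA2 k x1 x2 x3 l1 l2 l3 :=
  amri_formula_eq_EkA2_general k hk l1 l2 l3 x1 x2 x3
end

section
/- (Lemma 5.1, formula (alpha−).) Uniformly over all λ ∈ C⁺ and all X ∈ a with x2 ≥ x1, one has V(λ)^{2k}·E_k(X,λ) ≍ ∫_{λ3}^{λ2} ∫_{λ2}^{λ1} [(ν1−ν2)(α_λ − α_X(λ1−ν1)(λ2−ν2)) / (1−α_X(ν1−ν2))^{k+1}] (ν1−λ3)(ν2−λ3) e^{(x2−x3)ν1 + (x1−x3)ν2} W_k(λ,ν) dν1 dν2. -/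
/-!
With `t = (x₂ - x₁)(ν₁ - ν₂)/2 ≥ 0`, the two rank-one kernels in the integrand of `EkA2` are
multiples of `J_{p,q}(t) = ∫_{-1}^{1} e^{zt} (1-z)^{p-1} (1+z)^q dz` with `(p, q) = (k+1, k-1)`
(after `z ↦ -z`) and `(p, q) = (k, k)`, and `J_{p,q}(t) ≍ e^t (1+t)^{-p}` uniformly in `t ≥ 0`,
because the mass of `J_{p,q}(t)` sits in a window of width `1/(1+t)` at `z = 1`.
Since `1 - α_X(ν₁ - ν₂) = 1 + 2t` and
`(ν₁ - ν₂)(α_λ - α_X(λ₁-ν₁)(λ₂-ν₂)) = (ν₁-λ₂)(λ₁-ν₂) + (λ₁-ν₁)(λ₂-ν₂)(1 + 2t)`,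
the two integrands are then comparable pointwise, with a constant depending only on `k`,
and comparability passes through the double integral.
-/

open Real MeasureTheory

open Set

/-- `f ≍ g` (for nonnegative `g`) with an explicit constant `C`. -/
def Comparable (C f g : ℝ) : Prop := 0 ≤ g ∧ C⁻¹ * g ≤ f ∧ f ≤ C * g

namespace Comparable

variable {C C' f f' g g' h a : ℝ}

lemma nonneg (hC : 0 < C) (hfg : Comparable C f g) : 0 ≤ f :=
  (mul_nonneg (inv_pos.2 hC).le hfg.1).trans hfg.2.1

lemma mono (hC : 0 < C) (hCC' : C ≤ C') (hfg : Comparable C f g) : Comparable C' f g := by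
  obtain ⟨hg, hlo, hhi⟩ := hfg
  refine ⟨hg, le_trans ?_ hlo, hhi.trans (by gcongr)⟩
  gcongr

lemma add (hfg : Comparable C f g) (hfg' : Comparable C f' g') :
    Comparable C (f + f') (g + g') := by
  obtain ⟨hg, hlo, hhi⟩ := hfg
  obtain ⟨hg', hlo', hhi'⟩ := hfg'
  exact ⟨add_nonneg hg hg', by linarith, by linarith⟩

lemma mul_left (ha : 0 ≤ a) (hfg : Comparable C f g) : Comparable C (a * f) (a * g) := by
  obtain ⟨hg, hlo, hhi⟩ := hfg
  refine ⟨mul_nonneg ha hg, ?_, ?_⟩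
  · calc C⁻¹ * (a * g) = a * (C⁻¹ * g) := by ring
      _ ≤ a * f := by gcongr
  · calc a * f ≤ a * (C * g) := by gcongr
      _ = C * (a * g) := by ring

lemma mul_right (ha : 0 ≤ a) (hfg : Comparable C f g) : Comparable C (f * a) (g * a) := by
  simpa only [mul_comm _ a] using hfg.mul_left ha

lemma trans (hC : 0 < C) (hfg : Comparable C f g) (hgh : Comparable C' g h) :
    Comparable (C * C') f h := by
  obtain ⟨-, hlo, hhi⟩ := hfg
  obtain ⟨hh, hlo', hhi'⟩ := hgh
  refine ⟨hh, ?_, ?_⟩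
  · calc (C * C')⁻¹ * h = C⁻¹ * (C'⁻¹ * h) := by rw [mul_inv]; ring
      _ ≤ C⁻¹ * g := by gcongr
      _ ≤ f := hlo
  · calc f ≤ C * (C' * h) := hhi.trans (by gcongr)
      _ = C * C' * h := by ring

lemma const_mul_self (ha : 0 < a) (hg : 0 ≤ g) : Comparable (max a a⁻¹) (a * g) g := by
  refine ⟨hg, ?_, by gcongr; exact le_max_left _ _⟩
  gcongr
  exact inv_le_of_inv_le₀ ha (le_max_right _ _)

lemma of_le_of_le {c c' : ℝ} (hc : 0 < c) (hg : 0 ≤ g) (hlo : c * g ≤ f)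
    (hhi : f ≤ c' * g) :
    Comparable (max c' c⁻¹) f g := by
  refine ⟨hg, le_trans ?_ hlo, hhi.trans (by gcongr; exact le_max_left _ _)⟩
  gcongr
  exact inv_le_of_inv_le₀ hc (le_max_right _ _)

lemma intervalIntegral {F G : ℝ → ℝ} {a b : ℝ} (hab : a ≤ b) (hC : 0 < C)
    (hF : AEStronglyMeasurable F (volume.restrict (Ioc a b)))
    (hG : AEStronglyMeasurable G (volume.restrict (Ioc a b)))
    (hFG : ∀ x ∈ Icc a b, Comparable C (F x) (G x)) :
    Comparable C (∫ x in a..b, F x) (∫ x in a..b, G x) := by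
  have hae : ∀ᵐ x ∂volume.restrict (Ioc a b), Comparable C (F x) (G x) := by
    filter_upwards [ae_restrict_mem measurableSet_Ioc] with x hx
    exact hFG x (Ioc_subset_Icc_self hx)
  have hiff : IntervalIntegrable F volume a b ↔ IntervalIntegrable G volume a b := by
    simp only [intervalIntegrable_iff_integrableOn_Ioc_of_le hab]
    constructor
    · refine fun hFi => (hFi.const_mul C).mono' hG ?_
      filter_upwards [hae] with x ⟨hg, hlo, _⟩
      rw [Real.norm_of_nonneg hg]
      calc G x = C * (C⁻¹ * G x) := by field_simp
        _ ≤ C * F x := by gcongr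
    · refine fun hGi => (hGi.const_mul C).mono' hF ?_
      filter_upwards [hae] with x ⟨hg, hlo, hhi⟩
      rw [Real.norm_of_nonneg ((by positivity : 0 ≤ C⁻¹ * G x).trans hlo)]
      exact hhi
  have hGnn : 0 ≤ ∫ x in a..b, G x :=
    intervalIntegral.integral_nonneg hab fun x hx => (hFG x hx).1
  by_cases hGi : IntervalIntegrable G volume a b
  · have hFi := hiff.2 hGi
    refine ⟨hGnn, ?_, ?_⟩
    · rw [← intervalIntegral.integral_const_mul]
      exact intervalIntegral.integral_mono_on hab (hGi.const_mul _) hFi fun x hx => (hFG x hx).2.1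
    · rw [← intervalIntegral.integral_const_mul]
      exact intervalIntegral.integral_mono_on hab hFi (hGi.const_mul _) fun x hx => (hFG x hx).2.2
  · -- neither side is integrable, so both integrals take the junk value `0`
    rw [intervalIntegral.integral_undef hGi, intervalIntegral.integral_undef (mt hiff.1 hGi)]
    exact ⟨le_rfl, by simp, by simp⟩

end Comparable

lemma measurable_intervalIntegral_of_measurable_uncurry {F : ℝ → ℝ → ℝ}
    (hF : Measurable (Function.uncurry F)) (a b : ℝ) :
    Measurable fun x => ∫ y in a..b, F x y := by
  simp only [intervalIntegral]
  exact
    (hF.stronglyMeasurable.integral_prod_right' (ν := volume.restrict (Ioc a b))).measurable.sub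
      (hF.stronglyMeasurable.integral_prod_right' (ν := volume.restrict (Ioc b a))).measurable

lemma intervalIntegrable_one_add_rpow {r : ℝ} (hr : -1 < r) (b : ℝ) :
    IntervalIntegrable (fun z : ℝ => (1 + z) ^ r) volume (-1) b := by
  simpa using (intervalIntegral.intervalIntegrable_rpow' hr (a := 0) (b := 1 + b)).comp_add_left 1

lemma intervalIntegrable_one_sub_rpow {r : ℝ} (hr : -1 < r) (a : ℝ) :
    IntervalIntegrable (fun z : ℝ => (1 - z) ^ r) volume a 1 := by
  simpa using (intervalIntegral.intervalIntegrable_rpow' hr (a := 1 - a) (b := 0)).comp_sub_left 1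

lemma min_one_two_rpow_le_rpow {x : ℝ} (r : ℝ) (hx : x ∈ Icc (1 : ℝ) 2) :
    min 1 (2 ^ r) ≤ x ^ r := by
  rcases le_total 0 r with hr | hr
  · exact (min_le_left _ _).trans (one_le_rpow hx.1 hr)
  · exact (min_le_right _ _).trans (rpow_le_rpow_of_nonpos (by linarith [hx.1]) hx.2 hr)

lemma rpow_le_max_one_two_rpow {x : ℝ} (r : ℝ) (hx : x ∈ Icc (1 : ℝ) 2) :
    x ^ r ≤ max 1 (2 ^ r) := by
  rcases le_total 0 r with hr | hr
  · exact (rpow_le_rpow (by linarith [hx.1]) hx.2 hr).trans (le_max_right _ _)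
  · exact (rpow_le_one_of_one_le_of_nonpos hx.1 hr).trans (le_max_left _ _)

lemma integral_rpow_mul_exp_neg_mul_le {p b c : ℝ} (hp : 0 < p) (hb : 0 < b) (hc : 0 ≤ c) :
    ∫ u in (0 : ℝ)..c, u ^ (p - 1) * exp (-(b * u)) ≤ (1 / b) ^ p * Gamma p := by
  have hI := integral_rpow_mul_exp_neg_mul_Ioi hp hb
  have hint : IntegrableOn (fun u => u ^ (p - 1) * exp (-(b * u))) (Ioi 0) :=
    Integrable.of_integral_ne_zero (by rw [hI]; positivity)
  rw [intervalIntegral.integral_of_le hc, ← hI]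
  refine setIntegral_mono_set hint ?_ Ioc_subset_Ioi_self.eventuallyLE
  filter_upwards [ae_restrict_mem measurableSet_Ioi] with u hu
  have : 0 ≤ u := le_of_lt hu
  positivity

noncomputable def jacobiLaplace (p q t : ℝ) : ℝ :=
  ∫ z in (-1 : ℝ)..1, exp (z * t) * (1 - z) ^ (p - 1) * (1 + z) ^ q

section JacobiLaplace

variable {p q : ℝ}

lemma jacobiLaplace_integrand_nonneg (t : ℝ) {z : ℝ} (hz : z ∈ Icc (-1 : ℝ) 1) :
    0 ≤ exp (z * t) * (1 - z) ^ (p - 1) * (1 + z) ^ q := by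
  have : 0 ≤ 1 - z := by linarith [hz.2]
  have : 0 ≤ 1 + z := by linarith [hz.1]
  positivity

lemma intervalIntegrable_jacobiLaplace_integrand (hp : 0 < p) (hq : -1 < q) (t : ℝ) :
    IntervalIntegrable (fun z => exp (z * t) * (1 - z) ^ (p - 1) * (1 + z) ^ q) volume (-1) 1 := by
  refine IntervalIntegrable.trans (b := 0)
    ((intervalIntegrable_one_add_rpow hq 0).continuousOn_mul ?_) ?_
  · rw [uIcc_of_le (by norm_num)]
    exact (continuous_exp.comp (continuous_mul_const t)).continuousOn.mul
      (ContinuousOn.rpow_const (by fun_prop) fun z hz => Or.inl (by linarith [hz.2]))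
  · have hcont : ContinuousOn (fun z : ℝ => exp (z * t) * (1 + z) ^ q) (uIcc 0 1) := by
      rw [uIcc_of_le zero_le_one]
      exact (continuous_exp.comp (continuous_mul_const t)).continuousOn.mul
        (ContinuousOn.rpow_const (by fun_prop) fun z hz => Or.inl (by linarith [hz.1]))
    convert (intervalIntegrable_one_sub_rpow (by linarith : -1 < p - 1) 0).mul_continuousOn hcont
      using 2
    ring

lemma integral_neg_one_zero_jacobiLaplace_integrand_le (hp : 0 < p) (hq : -1 < q) {t : ℝ}
    (ht : 0 ≤ t) :
    ∫ z in (-1 : ℝ)..0, exp (z * t) * (1 - z) ^ (p - 1) * (1 + z) ^ q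
      ≤ max 1 (2 ^ (p - 1)) / (q + 1) := calc
  _ ≤ ∫ z in (-1 : ℝ)..0, max 1 (2 ^ (p - 1)) * (1 + z) ^ q := by
    refine intervalIntegral.integral_mono_on (by norm_num)
      ((intervalIntegrable_jacobiLaplace_integrand hp hq t).mono_set
        (uIcc_subset_uIcc (by simp) (by simp)))
      ((intervalIntegrable_one_add_rpow hq 0).const_mul _) fun z hz => ?_
    have : 0 ≤ (1 + z) ^ q := rpow_nonneg (by linarith [hz.1]) q
    have : 0 ≤ (1 - z) ^ (p - 1) := rpow_nonneg (by linarith [hz.2]) _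
    have : exp (z * t) ≤ 1 := exp_le_one_iff.2 (mul_nonpos_of_nonpos_of_nonneg hz.2 ht)
    have : (1 - z) ^ (p - 1) ≤ max 1 (2 ^ (p - 1)) :=
      rpow_le_max_one_two_rpow _ ⟨by linarith [hz.2], by linarith [hz.1]⟩
    calc exp (z * t) * (1 - z) ^ (p - 1) * (1 + z) ^ q
        ≤ 1 * max 1 (2 ^ (p - 1)) * (1 + z) ^ q := by gcongr
      _ = max 1 (2 ^ (p - 1)) * (1 + z) ^ q := by rw [one_mul]
  _ = max 1 (2 ^ (p - 1)) / (q + 1) := by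
    rw [intervalIntegral.integral_const_mul,
      intervalIntegral.integral_comp_add_left (fun u => u ^ q) 1, integral_rpow (Or.inl hq)]
    simp [zero_rpow (by linarith : q + 1 ≠ 0), div_eq_mul_inv]

lemma integral_zero_one_jacobiLaplace_integrand_le (hp : 0 < p) (hq : -1 < q) {t : ℝ}
    (ht : 0 ≤ t) :
    ∫ z in (0 : ℝ)..1, exp (z * t) * (1 - z) ^ (p - 1) * (1 + z) ^ q
      ≤ max 1 (2 ^ q) * exp 1 * Gamma p * (exp t * (1 + t) ^ (-p)) := by
  have h1t : 0 < 1 + t := by linarith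
  calc
    _ ≤ ∫ z in (0 : ℝ)..1,
          max 1 (2 ^ q) * exp (t + 1) * ((1 - z) ^ (p - 1) * exp (-((1 + t) * (1 - z)))) := by
      refine intervalIntegral.integral_mono_on zero_le_one
        ((intervalIntegrable_jacobiLaplace_integrand hp hq t).mono_set
          (uIcc_subset_uIcc (by simp) (by simp)))
        (((intervalIntegrable_one_sub_rpow (by linarith) 0).mul_continuousOn
          (by fun_prop)).const_mul _) fun z hz => ?_
      have : 0 ≤ (1 - z) ^ (p - 1) := rpow_nonneg (by linarith [hz.2]) _
      have : 0 ≤ (1 + z) ^ q := rpow_nonneg (by linarith [hz.1]) q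
      have : (1 + z) ^ q ≤ max 1 (2 ^ q) :=
        rpow_le_max_one_two_rpow _ ⟨by linarith [hz.1], by linarith [hz.2]⟩
      calc exp (z * t) * (1 - z) ^ (p - 1) * (1 + z) ^ q
          ≤ exp (t + 1 + -((1 + t) * (1 - z))) * (1 - z) ^ (p - 1) * max 1 (2 ^ q) := by
            gcongr
            nlinarith [hz.1]
        _ = _ := by rw [exp_add]; ring
    _ = max 1 (2 ^ q) * exp (t + 1) *
          ∫ u in (0 : ℝ)..1, u ^ (p - 1) * exp (-((1 + t) * u)) := by
      rw [intervalIntegral.integral_const_mul,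
        intervalIntegral.integral_comp_sub_left (fun u => u ^ (p - 1) * exp (-((1 + t) * u))) 1]
      simp
    _ ≤ max 1 (2 ^ q) * exp (t + 1) * ((1 / (1 + t)) ^ p * Gamma p) := by
      gcongr
      exact integral_rpow_mul_exp_neg_mul_le hp h1t zero_le_one
    _ = max 1 (2 ^ q) * exp 1 * Gamma p * (exp t * (1 + t) ^ (-p)) := by
      rw [exp_add, div_rpow zero_le_one h1t.le, one_rpow, rpow_neg h1t.le]
      ring

lemma jacobiLaplace_le (hp : 0 < p) (hq : -1 < q) :
    ∃ C, ∀ t, 0 ≤ t → jacobiLaplace p q t ≤ C * (exp t * (1 + t) ^ (-p)) := by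
  refine ⟨max 1 (2 ^ (p - 1)) / (q + 1) * (p ^ p * exp 1) + max 1 (2 ^ q) * exp 1 * Gamma p,
    fun t ht => ?_⟩
  have h1t : 0 < 1 + t := by linarith
  have hone : 1 ≤ p ^ p * exp 1 * (exp t * (1 + t) ^ (-p)) := by
    have h := ProbabilityTheory.rpow_abs_le_mul_exp_abs (1 + t) hp.le one_ne_zero
    rw [abs_of_pos h1t, abs_one, div_one, one_mul, exp_add] at h
    rw [rpow_neg h1t.le, ← mul_assoc, le_mul_inv_iff₀ (by positivity), one_mul]
    linarith
  have hM : 0 ≤ max 1 (2 ^ (p - 1)) / (q + 1) :=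
    div_nonneg (zero_le_one.trans (le_max_left _ _)) (by linarith)
  have hint := intervalIntegrable_jacobiLaplace_integrand hp hq t
  rw [jacobiLaplace, ← intervalIntegral.integral_add_adjacent_intervals (b := 0)
    (hint.mono_set (uIcc_subset_uIcc (by simp) (by simp)))
    (hint.mono_set (uIcc_subset_uIcc (by simp) (by simp)))]
  nlinarith [integral_neg_one_zero_jacobiLaplace_integrand_le hp hq ht,
    integral_zero_one_jacobiLaplace_integrand_le hp hq ht]

lemma le_jacobiLaplace (hp : 0 < p) (hq : -1 < q) :
    ∃ c > 0, ∀ t, 0 ≤ t → c * (exp t * (1 + t) ^ (-p)) ≤ jacobiLaplace p q t := by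
  set m : ℝ := min 1 (2 ^ q)
  have hm : 0 < m := lt_min one_pos (by positivity)
  refine ⟨exp (-1) * m / p, div_pos (mul_pos (exp_pos _) hm) hp, fun t ht => ?_⟩
  have h1t : 0 < 1 + t := by linarith
  set δ : ℝ := (1 + t)⁻¹
  have hδ : 0 < δ := inv_pos.2 h1t
  have hδ1 : δ ≤ 1 := inv_le_one_of_one_le₀ (by linarith)
  have hδt : δ * t ≤ 1 := by
    rw [inv_mul_le_iff₀ h1t]
    linarith
  calc exp (-1) * m / p * (exp t * (1 + t) ^ (-p))
      = ∫ z in (1 - δ)..1, exp (t - 1) * m * (1 - z) ^ (p - 1) := by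
        rw [intervalIntegral.integral_const_mul,
          intervalIntegral.integral_comp_sub_left (fun u => u ^ (p - 1)) 1,
          integral_rpow (Or.inl (by linarith))]
        simp only [sub_sub_cancel, sub_self, sub_add_cancel, zero_rpow hp.ne', sub_zero]
        rw [inv_rpow h1t.le, ← rpow_neg h1t.le, sub_eq_add_neg, exp_add]
        ring
    _ ≤ ∫ z in (1 - δ)..1, exp (z * t) * (1 - z) ^ (p - 1) * (1 + z) ^ q := by
      refine intervalIntegral.integral_mono_on (by linarith)
        ((intervalIntegrable_one_sub_rpow (by linarith) _).const_mul _)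
        ((intervalIntegrable_jacobiLaplace_integrand hp hq t).mono_set
          (uIcc_subset_uIcc (by simp [uIcc_of_le]; constructor <;> linarith) (by simp)))
        fun z hz => ?_
      have : 0 ≤ (1 - z) ^ (p - 1) := rpow_nonneg (by linarith [hz.2]) _
      have : m ≤ (1 + z) ^ q :=
        min_one_two_rpow_le_rpow _ ⟨by linarith [hz.1], by linarith [hz.2]⟩
      calc exp (t - 1) * m * (1 - z) ^ (p - 1) = exp (t - 1) * (1 - z) ^ (p - 1) * m := by ring
        _ ≤ exp (z * t) * (1 - z) ^ (p - 1) * (1 + z) ^ q := by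
          gcongr
          nlinarith [hz.1]
    _ ≤ jacobiLaplace p q t :=
      intervalIntegral.integral_mono_interval (by linarith) (by linarith) le_rfl
        ((ae_restrict_mem measurableSet_Ioc).mono fun z hz =>
          jacobiLaplace_integrand_nonneg t (Ioc_subset_Icc_self hz))
        (intervalIntegrable_jacobiLaplace_integrand hp hq t)

end JacobiLaplace

lemma jacobiLaplace_neg (p q t : ℝ) :
    jacobiLaplace p q (-t) = jacobiLaplace (q + 1) (p - 1) t := by
  have h := intervalIntegral.integral_comp_neg (a := -1) (b := 1)
    fun z => exp (z * t) * (1 - z) ^ (q + 1 - 1) * (1 + z) ^ (p - 1)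
  simp only [neg_neg] at h
  rw [jacobiLaplace, jacobiLaplace, ← h]
  refine intervalIntegral.integral_congr fun z _ => ?_
  ring_nf

lemma comparable_one_add_rpow_neg {p t : ℝ} (hp : 0 ≤ p) (ht : 0 ≤ t) :
    Comparable (2 ^ p) ((1 + t) ^ (-p)) ((1 + 2 * t) ^ (-p)) := by
  have h1t : 0 < 1 + t := by linarith
  refine ⟨by positivity, ?_, ?_⟩
  · rw [← rpow_neg zero_le_two, ← mul_rpow zero_le_two (by linarith)]
    exact rpow_le_rpow_of_nonpos h1t (by linarith) (by linarith)
  · have h2 : (2 : ℝ) ^ p = 2⁻¹ ^ (-p) := by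
      rw [rpow_neg (by norm_num), inv_rpow zero_le_two, inv_inv]
    rw [h2, ← mul_rpow (by norm_num) (by linarith)]
    exact rpow_le_rpow_of_nonpos (by linarith) (by linarith) (by linarith)

lemma exists_comparable_jacobiLaplace {p q : ℝ} (hp : 0 < p) (hq : -1 < q) :
    ∃ C > 0, ∀ t, 0 ≤ t →
      Comparable C (jacobiLaplace p q t) (exp t * (1 + 2 * t) ^ (-p)) := by
  obtain ⟨C, hC⟩ := jacobiLaplace_le hp hq
  obtain ⟨c, hc, hc'⟩ := le_jacobiLaplace hp hq
  have hC' : 0 < max C c⁻¹ := lt_max_of_lt_right (inv_pos.2 hc)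
  refine ⟨max C c⁻¹ * 2 ^ p, by positivity, fun t ht => ?_⟩
  have hJ : Comparable (max C c⁻¹) (jacobiLaplace p q t) (exp t * (1 + t) ^ (-p)) :=
    Comparable.of_le_of_le hc (by positivity) (hc' t ht) (hC t ht)
  exact hJ.trans hC' ((comparable_one_add_rpow_neg hp.le ht).mul_left (exp_pos t).le)

lemma Erk1_eq_jacobiLaplace (k x v : ℝ) :
    Erk1 k x v =
      Gamma (k + 1 / 2) / (sqrt π * Gamma k) * jacobiLaplace k k (x * v) := by
  simp only [Erk1, jacobiLaplace, mul_assoc]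

lemma exists_comparable_jacobiLaplace_combination {k : ℝ} (hk : 0 < k) :
    ∃ C > 0, ∀ a b t, 0 ≤ a → 0 ≤ b → 0 ≤ t →
      Comparable C (a * jacobiLaplace (k + 1) (k - 1) t + b * jacobiLaplace k k t)
        ((a + b * (1 + 2 * t)) * (exp t * (1 + 2 * t) ^ (-(k + 1)))) := by
  obtain ⟨C₁, hC₁, h₁⟩ :=
    exists_comparable_jacobiLaplace (p := k + 1) (q := k - 1) (by linarith) (by linarith)
  obtain ⟨C₂, hC₂, h₂⟩ := exists_comparable_jacobiLaplace (q := k) hk (by linarith)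
  refine ⟨max C₁ C₂, lt_max_of_lt_left hC₁, fun a b t ha hb ht => ?_⟩
  have h2t : 0 < 1 + 2 * t := by linarith
  have hsum := ((h₁ t ht).mono hC₁ (le_max_left _ _)).mul_left ha |>.add
    (((h₂ t ht).mono hC₂ (le_max_right _ _)).mul_left hb)
  convert hsum using 1
  rw [show -k = 1 + -(k + 1) by ring, rpow_add h2t, rpow_one]
  ring

lemma Wk_nonneg (k : ℝ) {l1 l2 l3 n1 n2 : ℝ} (hn1 : n1 ∈ Icc l2 l1) (hn2 : n2 ∈ Icc l3 l2) :
    0 ≤ Wk k l1 l2 l3 n1 n2 := by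
  obtain ⟨hn1l, hn1u⟩ := hn1
  obtain ⟨hn2l, hn2u⟩ := hn2
  refine rpow_nonneg ?_ _
  apply_rules [mul_nonneg, sub_nonneg.2] <;> linarith

noncomputable def ekA2Integrand (k x1 x2 x3 l1 l2 l3 n1 n2 : ℝ) : ℝ :=
  ((n1 - l2) * (l1 - n2) * Erk1 k ((x1 - x2) / 2) (n1 - n2)
    + (l1 - n1) * (l2 - n2) * Erk1 k (-(x1 - x2) / 2) (n1 - n2))
  * ((n1 - l3) * (n2 - l3)) * exp ((x1 + x2 - 2 * x3) * (n1 + n2) / 2)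
  * Wk k l1 l2 l3 n1 n2

noncomputable def alphaMinusIntegrand (k x1 x2 x3 l1 l2 l3 n1 n2 : ℝ) : ℝ :=
  (n1 - n2) * ((l1 - l2) - (x1 - x2) * (l1 - n1) * (l2 - n2))
    / (1 - (x1 - x2) * (n1 - n2)) ^ (k + 1)
  * ((n1 - l3) * (n2 - l3)) * exp ((x2 - x3) * n1 + (x1 - x3) * n2)
  * Wk k l1 l2 l3 n1 n2

lemma measurable_Erk1 (k x : ℝ) : Measurable (Erk1 k x) :=
  (measurable_intervalIntegral_of_measurable_uncurry
    (F := fun v z => exp (z * x * v) * (1 - z) ^ (k - 1) * (1 + z) ^ k) (by fun_prop)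
    _ _).const_mul _

lemma measurable_ekA2Integrand (k x1 x2 x3 l1 l2 l3 : ℝ) :
    Measurable (Function.uncurry fun n2 n1 => ekA2Integrand k x1 x2 x3 l1 l2 l3 n1 n2) := by
  have := measurable_Erk1 k ((x1 - x2) / 2)
  have := measurable_Erk1 k (-(x1 - x2) / 2)
  unfold ekA2Integrand Wk
  fun_prop

lemma measurable_alphaMinusIntegrand (k x1 x2 x3 l1 l2 l3 : ℝ) :
    Measurable (Function.uncurry fun n2 n1 => alphaMinusIntegrand k x1 x2 x3 l1 l2 l3 n1 n2) := by
  unfold alphaMinusIntegrand Wk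
  fun_prop

lemma Vlam_rpow_mul_EkA2 {k l1 l2 l3 : ℝ} (x1 x2 x3 : ℝ) (hV : Vlam l1 l2 l3 ^ (2 * k) ≠ 0) :
    Vlam l1 l2 l3 ^ (2 * k) * EkA2 k x1 x2 x3 l1 l2 l3 =
      ∫ n2 in l3..l2, ∫ n1 in l2..l1,
        3 * Gamma (3 * k) / Gamma k ^ 2 * ekA2Integrand k x1 x2 x3 l1 l2 l3 n1 n2 := by
  simp only [intervalIntegral.integral_const_mul]
  rw [EkA2, ← mul_assoc, mul_div_assoc', mul_div_mul_left _ _ hV]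
  rfl

lemma exists_comparable_integrands {k : ℝ} (hk : 0 < k) :
    ∃ C > 0, ∀ x1 x2 x3 l1 l2 l3 n1 n2 : ℝ,
      x1 ≤ x2 → n1 ∈ Icc l2 l1 → n2 ∈ Icc l3 l2 →
      Comparable C (3 * Gamma (3 * k) / Gamma k ^ 2 * ekA2Integrand k x1 x2 x3 l1 l2 l3 n1 n2)
        (alphaMinusIntegrand k x1 x2 x3 l1 l2 l3 n1 n2) := by
  obtain ⟨C, hC, hcomb⟩ := exists_comparable_jacobiLaplace_combination hk
  set m := 3 * Gamma (3 * k) / Gamma k ^ 2 * (Gamma (k + 1 / 2) / (sqrt π * Gamma k)) with hm_def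
  have hm : 0 < m := by positivity
  refine ⟨max m m⁻¹ * C, by positivity, fun x1 x2 x3 l1 l2 l3 n1 n2 hx hn1 hn2 => ?_⟩
  obtain ⟨hn1l, hn1u⟩ := hn1
  obtain ⟨hn2l, hn2u⟩ := hn2
  obtain ⟨t, ht⟩ : ∃ t, t = (x2 - x1) * (n1 - n2) / 2 := ⟨_, rfl⟩
  have hcomb' := hcomb ((n1 - l2) * (l1 - n2)) ((l1 - n1) * (l2 - n2)) t
    (by nlinarith) (by nlinarith) (by rw [ht]; nlinarith)
  have hP : 0 ≤ (n1 - l3) * (n2 - l3) * exp ((x1 + x2 - 2 * x3) * (n1 + n2) / 2)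
      * Wk k l1 l2 l3 n1 n2 :=
    mul_nonneg (mul_nonneg (by nlinarith) (exp_pos _).le) (Wk_nonneg k ⟨hn1l, hn1u⟩ ⟨hn2l, hn2u⟩)
  convert ((Comparable.const_mul_self hm (hcomb'.nonneg hC)).trans (by positivity)
    hcomb').mul_right hP using 1
  · rw [ekA2Integrand, Erk1_eq_jacobiLaplace, Erk1_eq_jacobiLaplace,
      show (x1 - x2) / 2 * (n1 - n2) = -t by rw [ht]; ring, jacobiLaplace_neg,
      show -(x1 - x2) / 2 * (n1 - n2) = t by rw [ht]; ring, hm_def]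
    ring
  · have h2t : 0 < 1 + 2 * t := by rw [ht]; nlinarith
    rw [alphaMinusIntegrand, show 1 - (x1 - x2) * (n1 - n2) = 1 + 2 * t by rw [ht]; ring,
      show (x2 - x3) * n1 + (x1 - x3) * n2 = t + (x1 + x2 - 2 * x3) * (n1 + n2) / 2 by
        rw [ht]; ring, exp_add, div_eq_mul_inv, ← rpow_neg h2t.le]
    subst ht
    ring

/-- Lemma 5.x: two-sided estimate for `V(λ)^{2k} E_k(X,λ)`. -/
theorem lemma_alpha_minus (k : ℝ) (hk : 0 < k) :
    ∃ C : ℝ, 0 < C ∧ ∀ l1 l2 l3 x1 x2 x3 : ℝ,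
      l1 + l2 + l3 = 0 →
      l2 < l1 →
      l3 < l2 →
      x1 + x2 + x3 = 0 →
      x1 ≤ x2 →
      (C⁻¹ * (∫ n2 in l3..l2, ∫ n1 in l2..l1,
          (n1 - n2) * ((l1 - l2) - (x1 - x2) * (l1 - n1) * (l2 - n2))
            / (1 - (x1 - x2) * (n1 - n2)) ^ (k + 1)
          * ((n1 - l3) * (n2 - l3)) * Real.exp ((x2 - x3) * n1 + (x1 - x3) * n2)
          * Wk k l1 l2 l3 n1 n2)
        ≤ Vlam l1 l2 l3 ^ (2 * k) * EkA2 k x1 x2 x3 l1 l2 l3 ∧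
      Vlam l1 l2 l3 ^ (2 * k) * EkA2 k x1 x2 x3 l1 l2 l3
        ≤ C * (∫ n2 in l3..l2, ∫ n1 in l2..l1,
          (n1 - n2) * ((l1 - l2) - (x1 - x2) * (l1 - n1) * (l2 - n2))
            / (1 - (x1 - x2) * (n1 - n2)) ^ (k + 1)
          * ((n1 - l3) * (n2 - l3)) * Real.exp ((x2 - x3) * n1 + (x1 - x3) * n2)
          * Wk k l1 l2 l3 n1 n2)) := by
  obtain ⟨C, hC, hpoint⟩ := exists_comparable_integrands hk
  refine ⟨C, hC, fun l1 l2 l3 x1 x2 x3 _ hl12 hl23 _ hx => ?_⟩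
  have hV : Vlam l1 l2 l3 ^ (2 * k) ≠ 0 := by
    refine (rpow_pos_of_pos ?_ _).ne'
    exact mul_pos (mul_pos (by linarith) (by linarith)) (by linarith)
  have hE : Measurable (Function.uncurry fun n2 n1 =>
      3 * Gamma (3 * k) / Gamma k ^ 2 * ekA2Integrand k x1 x2 x3 l1 l2 l3 n1 n2) :=
    (measurable_ekA2Integrand k x1 x2 x3 l1 l2 l3).const_mul _
  have hA := measurable_alphaMinusIntegrand k x1 x2 x3 l1 l2 l3
  have h := Comparable.intervalIntegral hl23.le hC
    (measurable_intervalIntegral_of_measurable_uncurry hE _ _).aestronglyMeasurable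
    (measurable_intervalIntegral_of_measurable_uncurry hA _ _).aestronglyMeasurable
    fun n2 hn2 => Comparable.intervalIntegral hl12.le hC
      (hE.comp measurable_prodMk_left).aestronglyMeasurable
      (hA.comp measurable_prodMk_left).aestronglyMeasurable
      fun n1 hn1 => hpoint x1 x2 x3 l1 l2 l3 n1 n2 hx hn1 hn2
  rw [Vlam_rpow_mul_EkA2 x1 x2 x3 hV]
  exact h.2
end
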